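/- Double-min duality, case m = n (dual to primal direction): Suppose m = n. If ζ̄ ∈ 𝓢ₐ⁻ is a critical point of Π^d and is a local minimizer of Π^d on 𝓢ₐ⁻, then x̄ = Gₐ(ζ̄)⁻¹f is a local minimizer of Π on ℝⁿ, and Π(x̄) = Π^d(ζ̄). -/

import Mathlib

/-!
For admissible `ζ = (τ, σ)` with `Gₐ(ζ)` invertible and `x = Gₐ(ζ)⁻¹ f`, the identity
`Gₐ(ζ) x = f` turns `Π x - Πᵈ ζ` into a sum of Fenchel–Young gaps: the Gibbs gap between
`log (1 + ∑ exp (β ξᵢ))` and the negative entropy of `τ`, plus `∑ (αᵢ ηᵢ - σᵢ)² / (2 αᵢ)`, where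
`ξᵢ = ½ xᵀQᵢx + dᵢ` and `ηᵢ = ½ xᵀBᵢx + cᵢ`. Hence `Πᵈ ζ ≤ Π x`, with equality at a critical point.

Since `𝓢ₐ⁻` is open, `ζ̄` is an unconstrained local minimizer of `Πᵈ`. The `m = n` vectors
`Qᵢ x̄`, `Bⱼ x̄` are linearly independent: along a relation `v` the equation `Gₐ(ζ̄ + t v) x̄ = f`
persists, so `Πᵈ(ζ̄ + t v)` is a constant minus the strictly convex `V₁* + V₂*`, which cannot have
a local maximum at `t = 0`. Hence they form a basis, and for `x` near `x̄` the linear equation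
`Gₐ(ζ) x = f` has a solution `ζ(x)` depending continuously on `x` with `ζ(x̄) = ζ̄`. Then
`Π x̄ = Πᵈ ζ̄ ≤ Πᵈ ζ(x) ≤ Π x`.
-/

open Matrix Filter Topology Finset

theorem Matrix.inv_mulVec_eq_of_mulVec_eq {n K : Type*} [Fintype n] [DecidableEq n] [Field K]
    {M : Matrix n n K} {x y : n → K} (hM : M.det ≠ 0) (h : M *ᵥ x = y) : M⁻¹ *ᵥ y = x :=
  haveI := M.invertibleOfIsUnitDet (isUnit_iff_ne_zero.2 hM)
  inv_mulVec_eq_vec h.symm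

theorem Matrix.IsSymm.dotProduct_mul_mul_mulVec {n R : Type*} [Fintype n] [CommSemiring R]
    {G : Matrix n n R} (hG : G.IsSymm) (M : Matrix n n R) (v : n → R) :
    v ⬝ᵥ (G * M * G) *ᵥ v = (G *ᵥ v) ⬝ᵥ M *ᵥ (G *ᵥ v) := by
  rw [← mulVec_mulVec, ← mulVec_mulVec, dotProduct_mulVec, ← mulVec_transpose, hG.eq]

theorem isOpen_setOf_forall_dotProduct_mulVec_neg {n : Type*} [Fintype n] :
    IsOpen {M : Matrix n n ℝ | ∀ x : n → ℝ, x ≠ 0 → x ⬝ᵥ M *ᵥ x < 0} := by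
  have hsphere : {M : Matrix n n ℝ | ∀ x : n → ℝ, x ≠ 0 → x ⬝ᵥ M *ᵥ x < 0}
      = {M | ∀ x ∈ Metric.sphere (0 : n → ℝ) 1, x ⬝ᵥ M *ᵥ x < 0} := by
    ext M
    refine ⟨fun h x hx => h x (ne_zero_of_mem_unit_sphere ⟨x, hx⟩), fun h x hx => ?_⟩
    have hu := h (‖x‖⁻¹ • x) (by simp [norm_smul, hx])
    rw [mulVec_smul, dotProduct_smul, smul_dotProduct, smul_eq_mul, smul_eq_mul] at hu
    have : 0 < ‖x‖⁻¹ := by positivity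
    nlinarith [mul_pos this this]
  rw [hsphere, isOpen_iff_eventually]
  intro M hM
  refine (isCompact_sphere 0 1).eventually_forall_of_forall_eventually fun y hy => ?_
  have hcont : Continuous fun p : Matrix n n ℝ × (n → ℝ) => p.2 ⬝ᵥ p.1 *ᵥ p.2 := by fun_prop
  exact hcont.continuousAt.eventually (eventually_lt_nhds (hM y hy))

theorem exists_tendsto_sum_smul_eq {X m n : Type*} [TopologicalSpace X] [Fintype m] [Fintype n]
    [DecidableEq n] (e : m ≃ n) {u : X → m → n → ℝ} {g : X → n → ℝ} {x₀ : X} {a : m → ℝ}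
    (hu : ContinuousAt u x₀) (hg : ContinuousAt g x₀) (hli : LinearIndependent ℝ (u x₀))
    (ha : ∑ j, a j • u x₀ j = g x₀) :
    ∃ φ : X → m → ℝ, Tendsto φ (𝓝 x₀) (𝓝 a) ∧ ∀ᶠ x in 𝓝 x₀, ∑ j, φ x j • u x j = g x := by
  set N : X → Matrix n n ℝ := fun x => Matrix.of fun i k => u x (e.symm k) i
  have hN (x : X) (w : n → ℝ) : N x *ᵥ w = ∑ j, w (e j) • u x j := by
    ext i
    simp only [N, mulVec, dotProduct, of_apply, Finset.sum_apply, Pi.smul_apply, smul_eq_mul]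
    exact Fintype.sum_equiv e.symm _ _ fun k => by rw [e.apply_symm_apply, mul_comm]
  have hdet : (N x₀).det ≠ 0 := by
    have : IsUnit (N x₀) := linearIndependent_cols_iff_isUnit.1 (hli.comp _ e.symm.injective)
    exact ((isUnit_iff_isUnit_det _).1 this).ne_zero
  have hof : Continuous fun U : m → n → ℝ => (Matrix.of fun i k => U (e.symm k) i : Matrix n n ℝ) :=
    continuous_matrix fun i k => (continuous_apply i).comp (continuous_apply (e.symm k))
  have hNcont : ContinuousAt N x₀ := hof.continuousAt.comp hu
  have hinv : ContinuousAt (fun x => (N x)⁻¹) x₀ := by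
    refine (continuousAt_matrix_inv _ ?_).comp hNcont
    rw [Ring.inverse_eq_inv']
    exact continuousAt_inv₀ hdet
  have hsol : (N x₀)⁻¹ *ᵥ g x₀ = a ∘ e.symm := by
    refine inv_mulVec_eq_of_mulVec_eq hdet ?_
    simpa [hN] using ha
  refine ⟨fun x j => ((N x)⁻¹ *ᵥ g x) (e j), ?_, ?_⟩
  · have hcont : ContinuousAt (fun x j => ((N x)⁻¹ *ᵥ g x) (e j)) x₀ :=
      continuousAt_pi.2 fun j => (continuous_apply (e j)).continuousAt.comp
        ((continuous_fst.matrix_mulVec continuous_snd).continuousAt.comp (hinv.prodMk hg))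
    simpa [ContinuousAt, hsol] using hcont
  · have hdetcont : ContinuousAt (fun x => (N x).det) x₀ :=
      continuous_id.matrix_det.continuousAt.comp hNcont
    filter_upwards [hdetcont.eventually_ne hdet] with x hx
    rw [← hN, mulVec_mulVec, mul_nonsing_inv _ (isUnit_iff_ne_zero.2 hx), one_mulVec]

theorem StrictConvexOn.const_mul_add_mul {s : Set ℝ} {φ : ℝ → ℝ} (hφ : StrictConvexOn ℝ s φ)
    {a : ℝ} (ha : 0 < a) (b : ℝ) : StrictConvexOn ℝ s (fun t => a * φ t + b * t) := by
  refine ⟨hφ.1, fun x hx y hy hxy u v hu hv huv => ?_⟩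
  have := mul_lt_mul_of_pos_left (hφ.2 hx hy hxy hu hv huv) ha
  simp only [smul_eq_mul] at this ⊢
  linarith

theorem strictConvexOn_univ_pi_sum {m : Type*} [Fintype m] {s : m → Set ℝ} {φ : m → ℝ → ℝ}
    (hφ : ∀ j, StrictConvexOn ℝ (s j) (φ j)) :
    StrictConvexOn ℝ (Set.univ.pi s) (fun x => ∑ j, φ j (x j)) := by
  refine ⟨convex_pi fun j _ => (hφ j).1, fun x hx y hy hxy a b ha hb hab => ?_⟩
  obtain ⟨j, hj⟩ := Function.ne_iff.1 hxy
  simp only [Pi.add_apply, Pi.smul_apply, smul_eq_mul, mul_sum, ← sum_add_distrib]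
  exact sum_lt_sum (fun k _ => (hφ k).convexOn.2 (hx k trivial) (hy k trivial) ha.le hb.le hab)
    ⟨j, mem_univ j, (hφ j).2 (hx j trivial) (hy j trivial) hj ha hb hab⟩

theorem StrictConvexOn.not_isLocalMax_comp_add_smul {E : Type*} [AddCommGroup E] [Module ℝ E]
    [TopologicalSpace E] [ContinuousAdd E] [ContinuousSMul ℝ E] {s : Set E} {W : E → ℝ}
    (hW : StrictConvexOn ℝ s W) {x v : E} (hs : s ∈ 𝓝 x) (hv : v ≠ 0) :
    ¬ IsLocalMax (fun t : ℝ => W (x + t • v)) 0 := by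
  intro hmax
  have hline : Tendsto (fun t : ℝ => x + t • v) (𝓝 0) (𝓝 x) := by
    have : Continuous fun t : ℝ => x + t • v := by fun_prop
    simpa using this.tendsto 0
  have hmax' : ∀ᶠ t in 𝓝 (0 : ℝ), W (x + t • v) ≤ W x := by
    simpa [IsLocalMax, IsMaxFilter] using hmax
  have hgood : ∀ᶠ t in 𝓝 (0 : ℝ), x + t • v ∈ s ∧ W (x + t • v) ≤ W x :=
    (hline.eventually_mem hs).and hmax'
  obtain ⟨t, ht, ⟨hp, hWp⟩, hm, hWm⟩ :=
    (hgood.and ((continuous_neg.tendsto' 0 0 neg_zero).eventually hgood)).exists_gt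
  have hne : x + t • v ≠ x + (-t) • v := fun h => by
    have := smul_left_injective ℝ hv (add_left_cancel h)
    linarith
  have hmid := hW.2 hp hm hne one_half_pos one_half_pos (add_halves 1)
  have hx : (1/2 : ℝ) • (x + t • v) + (1/2 : ℝ) • (x + (-t) • v) = x := by module
  rw [hx, smul_eq_mul, smul_eq_mul] at hmid
  linarith

namespace CanonicalDuality

noncomputable section

section Dual

variable {n ι κ : Type*} [Fintype ι]

def negEntropy (τ : ι → ℝ) : ℝ :=
  ∑ i, τ i * Real.log (τ i) + (1 - ∑ i, τ i) * Real.log (1 - ∑ i, τ i)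

def entropyConj (β : ℝ) (d τ : ι → ℝ) : ℝ :=
  (1/β) * negEntropy τ - ∑ i, d i * τ i

def dualDomain : Set (ι ⊕ κ → ℝ) :=
  {ζ | (∀ i, 0 < ζ (.inl i)) ∧ ∑ i, ζ (.inl i) < 1}

theorem sum_mul_le_log_one_add_sum_exp_add_negEntropy {τ : ι → ℝ} (hτ : ∀ i, 0 < τ i)
    (hτ₁ : ∑ i, τ i < 1) (y : ι → ℝ) :
    ∑ i, τ i * y i ≤ Real.log (1 + ∑ i, Real.exp (y i)) + negEntropy τ := by
  -- applied to the weights `τ i`, `1 - ∑ τ` against `exp (y i) / T`, `1 / T`, which sum to `1`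
  have key {w z : ℝ} (hw : 0 < w) (hz : 0 < z) : w * (Real.log z - Real.log w) ≤ z - w := by
    have := Real.log_le_sub_one_of_pos (div_pos hz hw)
    rw [Real.log_div hz.ne' hw.ne'] at this
    calc w * (Real.log z - Real.log w) ≤ w * (z / w - 1) := by gcongr
      _ = z - w := by field_simp
  set T := 1 + ∑ i, Real.exp (y i)
  set s := 1 - ∑ i, τ i
  have hT : 0 < T := by positivity
  have hs : 0 < s := by linarith
  have hsum := Finset.sum_le_sum fun i (_ : i ∈ univ) =>
    key (hτ i) (div_pos (Real.exp_pos (y i)) hT)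
  have hlast := key hs (one_div_pos.2 hT)
  simp only [Real.log_div (Real.exp_pos _).ne' hT.ne', Real.log_exp, one_div, Real.log_inv,
    mul_sub, sum_sub_distrib, ← sum_div, ← sum_mul] at hsum hlast
  have hT' : (∑ i, Real.exp (y i)) / T + T⁻¹ = 1 := by field_simp; simp only [T]; ring
  unfold negEntropy
  linarith

theorem log_one_add_sum_exp_add_negEntropy_of_eq {τ y : ι → ℝ} (hτ : ∀ i, 0 < τ i)
    (hτ₁ : ∑ i, τ i < 1) (hy : ∀ i, y i = Real.log (τ i / (1 - ∑ j, τ j))) :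
    Real.log (1 + ∑ i, Real.exp (y i)) + negEntropy τ = ∑ i, τ i * y i := by
  have hs : 0 < 1 - ∑ i, τ i := by linarith
  have hexp : 1 + ∑ i, Real.exp (y i) = (1 - ∑ i, τ i)⁻¹ := by
    simp only [hy, Real.exp_log (div_pos (hτ _) hs), ← sum_div]
    field_simp
    ring
  rw [hexp, Real.log_inv]
  simp only [negEntropy, hy, Real.log_div (hτ _).ne' hs.ne', mul_sub, sum_sub_distrib, ← sum_mul]
  ring

theorem convex_dualDomain : Convex ℝ (dualDomain : Set (ι ⊕ κ → ℝ)) := by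
  refine convex_iff_forall_pos.2 fun x hx y hy a b ha hb hab => ⟨fun i => ?_, ?_⟩
  · have := hx.1 i
    have := hy.1 i
    simp only [Pi.add_apply, Pi.smul_apply, smul_eq_mul]
    positivity
  · simp only [Pi.add_apply, Pi.smul_apply, smul_eq_mul, sum_add_distrib, ← mul_sum]
    nlinarith [hx.2, hy.2]

theorem isOpen_dualDomain : IsOpen (dualDomain : Set (ι ⊕ κ → ℝ)) := by
  simp only [dualDomain, Set.ofPred_and, Set.ofPred_forall]
  exact (isOpen_iInter_of_finite fun i => isOpen_lt continuous_const (continuous_apply _)).inter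
    (isOpen_lt (by fun_prop) continuous_const)

theorem convexOn_one_sub_sum_mul_log :
    ConvexOn ℝ (dualDomain : Set (ι ⊕ κ → ℝ))
      (fun ζ => (1 - ∑ i, ζ (.inl i)) * Real.log (1 - ∑ i, ζ (.inl i))) := by
  refine ⟨convex_dualDomain, fun x hx y hy a b ha hb hab => ?_⟩
  have h : 1 - ∑ i, (a • x + b • y) (.inl i)
      = a * (1 - ∑ i, x (.inl i)) + b * (1 - ∑ i, y (.inl i)) := by
    simp only [Pi.add_apply, Pi.smul_apply, smul_eq_mul, sum_add_distrib, ← mul_sum]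
    linear_combination (-1 : ℝ) * hab
  dsimp only
  rw [h]
  exact Real.convexOn_mul_log.2 (Set.mem_Ici.2 (by linarith [hx.2]))
    (Set.mem_Ici.2 (by linarith [hy.2])) ha hb hab

variable [Fintype κ]

def dualMatrix (A : Matrix n n ℝ) (Q : ι → Matrix n n ℝ) (B : κ → Matrix n n ℝ)
    (ζ : ι ⊕ κ → ℝ) : Matrix n n ℝ :=
  A + ∑ i, ζ (.inl i) • Q i + ∑ i, ζ (.inr i) • B i

def quadConj (α c σ : κ → ℝ) : ℝ :=
  ∑ i, σ i ^ 2 / (2 * α i) - ∑ i, c i * σ i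

def dualPotential (d : ι → ℝ) (c : κ → ℝ) (β : ℝ) (α : κ → ℝ) (ζ : ι ⊕ κ → ℝ) : ℝ :=
  entropyConj β d (fun i => ζ (.inl i)) + quadConj α c (fun i => ζ (.inr i))

variable {A : Matrix n n ℝ} {Q : ι → Matrix n n ℝ} {B : κ → Matrix n n ℝ}
  {d : ι → ℝ} {c : κ → ℝ} {β : ℝ} {α : κ → ℝ}

theorem isSymm_dualMatrix (hA : A.IsSymm) (hQ : ∀ i, (Q i).IsSymm) (hB : ∀ i, (B i).IsSymm)
    (ζ : ι ⊕ κ → ℝ) : (dualMatrix A Q B ζ).IsSymm := by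
  simp [dualMatrix, IsSymm, transpose_sum, hA.eq, fun i => (hQ i).eq, fun i => (hB i).eq]

theorem continuous_dualMatrix : Continuous (dualMatrix A Q B) := by
  unfold dualMatrix
  fun_prop

theorem strictConvexOn_dualPotential (hβ : 0 < β) (hα : ∀ i, 0 < α i) :
    StrictConvexOn ℝ dualDomain (dualPotential d c β α) := by
  set φ : ι ⊕ κ → ℝ → ℝ := Sum.elim (fun i t => (1/β) * (t * Real.log t) + (-d i) * t)
    (fun i t => (2 * α i)⁻¹ * t ^ 2 + (-c i) * t)
  set s : ι ⊕ κ → Set ℝ := Sum.elim (fun _ => Set.Ici 0) (fun _ => Set.univ)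
  have hφ : ∀ j, StrictConvexOn ℝ (s j) (φ j) := by
    rintro (i | i)
    · exact Real.strictConvexOn_mul_log.const_mul_add_mul (by positivity) _
    · exact (Even.strictConvexOn_pow even_two two_ne_zero).const_mul_add_mul
        (by have := hα i; positivity) _
  have hsub : dualDomain ⊆ Set.univ.pi s := by
    rintro ζ hζ (i | i) -
    exacts [(hζ.1 i).le, trivial]
  refine (((strictConvexOn_univ_pi_sum hφ).subset hsub convex_dualDomain).add_convexOn
    (convexOn_one_sub_sum_mul_log.smul (one_div_pos.2 hβ).le)).congr fun ζ _ => ?_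
  simp only [φ, dualPotential, entropyConj, quadConj, negEntropy, Fintype.sum_sum_type,
    Sum.elim_inl, Sum.elim_inr, smul_eq_mul, sum_add_distrib, ← mul_sum, Pi.add_apply]
  simp only [div_eq_inv_mul, neg_mul, sum_neg_distrib]
  ring

end Dual

section Primal

variable {n ι κ : Type*} [Fintype n] [Fintype ι] [Fintype κ]

def primal (A : Matrix n n ℝ) (Q : ι → Matrix n n ℝ) (B : κ → Matrix n n ℝ) (f : n → ℝ)
    (d : ι → ℝ) (c : κ → ℝ) (β : ℝ) (α : κ → ℝ) (x : n → ℝ) : ℝ :=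
  (1/2) * (x ⬝ᵥ A *ᵥ x) - f ⬝ᵥ x
    + (1/β) * Real.log (1 + ∑ i, Real.exp (β * ((1/2) * (x ⬝ᵥ Q i *ᵥ x) + d i)))
    + ∑ i, (α i / 2) * ((1/2) * (x ⬝ᵥ B i *ᵥ x) + c i) ^ 2

def canonicalDual [DecidableEq n] (A : Matrix n n ℝ) (Q : ι → Matrix n n ℝ)
    (B : κ → Matrix n n ℝ) (f : n → ℝ)
    (d : ι → ℝ) (c : κ → ℝ) (β : ℝ) (α : κ → ℝ) (ζ : ι ⊕ κ → ℝ) : ℝ :=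
  -(1/2) * (f ⬝ᵥ (dualMatrix A Q B ζ)⁻¹ *ᵥ f)
    - entropyConj β d (fun i => ζ (.inl i)) - quadConj α c (fun i => ζ (.inr i))

def negDefDualDomain [DecidableEq n] (A : Matrix n n ℝ) (Q : ι → Matrix n n ℝ)
    (B : κ → Matrix n n ℝ) : Set (ι ⊕ κ → ℝ) :=
  {ζ | (∀ i, 0 < ζ (.inl i)) ∧ ∑ i, ζ (.inl i) < 1 ∧ (dualMatrix A Q B ζ).det ≠ 0 ∧
    ∀ x : n → ℝ, x ≠ 0 → x ⬝ᵥ dualMatrix A Q B ζ *ᵥ x < 0}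

variable {A : Matrix n n ℝ} {Q : ι → Matrix n n ℝ} {B : κ → Matrix n n ℝ} {f : n → ℝ}
  {d : ι → ℝ} {c : κ → ℝ} {β : ℝ} {α : κ → ℝ}

theorem dualMatrix_mulVec (ζ : ι ⊕ κ → ℝ) (x : n → ℝ) :
    dualMatrix A Q B ζ *ᵥ x = A *ᵥ x + ∑ j, ζ j • (Sum.elim Q B j *ᵥ x) := by
  simp [dualMatrix, add_mulVec, sum_mulVec, smul_mulVec, Fintype.sum_sum_type, add_assoc]

theorem dotProduct_dualMatrix_mulVec (ζ : ι ⊕ κ → ℝ) (x : n → ℝ) :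
    x ⬝ᵥ dualMatrix A Q B ζ *ᵥ x = x ⬝ᵥ A *ᵥ x + ∑ i, ζ (.inl i) * (x ⬝ᵥ Q i *ᵥ x)
      + ∑ i, ζ (.inr i) * (x ⬝ᵥ B i *ᵥ x) := by
  simp [dualMatrix_mulVec, dotProduct_add, dotProduct_sum, Fintype.sum_sum_type, add_assoc]

variable [DecidableEq n]

theorem canonicalDual_eq_sub_dualPotential (ζ : ι ⊕ κ → ℝ) :
    canonicalDual A Q B f d c β α ζ
      = -(1/2) * (f ⬝ᵥ (dualMatrix A Q B ζ)⁻¹ *ᵥ f) - dualPotential d c β α ζ := by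
  rw [canonicalDual, dualPotential, sub_sub]

theorem primal_sub_canonicalDual (hβ : β ≠ 0) (hα : ∀ i, α i ≠ 0) {ζ : ι ⊕ κ → ℝ}
    {x : n → ℝ} (hdet : (dualMatrix A Q B ζ).det ≠ 0) (hx : dualMatrix A Q B ζ *ᵥ x = f) :
    primal A Q B f d c β α x - canonicalDual A Q B f d c β α ζ =
      (1/β) * (Real.log (1 + ∑ i, Real.exp (β * ((1/2) * (x ⬝ᵥ Q i *ᵥ x) + d i)))
        + negEntropy (fun i => ζ (.inl i))
        - ∑ i, ζ (.inl i) * (β * ((1/2) * (x ⬝ᵥ Q i *ᵥ x) + d i)))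
      + ∑ i, (α i * ((1/2) * (x ⬝ᵥ B i *ᵥ x) + c i) - ζ (.inr i)) ^ 2 / (2 * α i) := by
  have hsq (i : κ) : (α i * ((1/2) * (x ⬝ᵥ B i *ᵥ x) + c i) - ζ (.inr i)) ^ 2 / (2 * α i)
      = (α i / 2) * ((1/2) * (x ⬝ᵥ B i *ᵥ x) + c i) ^ 2 + ζ (.inr i) ^ 2 / (2 * α i)
        - ζ (.inr i) * ((1/2) * (x ⬝ᵥ B i *ᵥ x) + c i) := by
    field_simp [hα i]
    ring
  have hβsum : ∑ i, ζ (.inl i) * (β * ((1/2) * (x ⬝ᵥ Q i *ᵥ x) + d i))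
      = β * ∑ i, ζ (.inl i) * ((1/2) * (x ⬝ᵥ Q i *ᵥ x) + d i) := by
    simp only [mul_left_comm _ β, ← mul_sum]
  have hfx := dotProduct_dualMatrix_mulVec (A := A) (Q := Q) (B := B) ζ x
  rw [hx, dotProduct_comm] at hfx
  rw [primal, canonicalDual, entropyConj, quadConj, inv_mulVec_eq_of_mulVec_eq hdet hx,
    sum_congr rfl fun i _ => hsq i, hβsum, mul_sub, ← mul_assoc, one_div_mul_cancel hβ, one_mul]
  simp only [mul_add, sum_add_distrib, sum_sub_distrib, ← mul_sum, mul_left_comm _ (1/2 : ℝ),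
    mul_comm (ζ _) (d _), mul_comm (ζ _) (c _)]
  linear_combination (-1/2 : ℝ) * hfx

theorem canonicalDual_le_primal (hβ : 0 < β) (hα : ∀ i, 0 < α i) {ζ : ι ⊕ κ → ℝ} {x : n → ℝ}
    (hζ : ζ ∈ dualDomain) (hdet : (dualMatrix A Q B ζ).det ≠ 0)
    (hx : dualMatrix A Q B ζ *ᵥ x = f) :
    canonicalDual A Q B f d c β α ζ ≤ primal A Q B f d c β α x := by
  rw [← sub_nonneg, primal_sub_canonicalDual hβ.ne' (fun i => (hα i).ne') hdet hx]
  have hent := sum_mul_le_log_one_add_sum_exp_add_negEntropy hζ.1 hζ.2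
    (fun i => β * ((1/2) * (x ⬝ᵥ Q i *ᵥ x) + d i))
  exact add_nonneg (mul_nonneg (one_div_pos.2 hβ).le (by linarith))
    (sum_nonneg fun i _ => by have := hα i; positivity)

theorem primal_eq_canonicalDual (hβ : β ≠ 0) (hα : ∀ i, α i ≠ 0) {ζ : ι ⊕ κ → ℝ} {x : n → ℝ}
    (hζ : ζ ∈ dualDomain) (hdet : (dualMatrix A Q B ζ).det ≠ 0)
    (hx : dualMatrix A Q B ζ *ᵥ x = f)
    (hcritQ : ∀ i, (1/2) * (x ⬝ᵥ Q i *ᵥ x) + d i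
      = (1/β) * Real.log (ζ (.inl i) / (1 - ∑ j, ζ (.inl j))))
    (hcritB : ∀ i, (1/2) * (x ⬝ᵥ B i *ᵥ x) + c i = ζ (.inr i) / α i) :
    primal A Q B f d c β α x = canonicalDual A Q B f d c β α ζ := by
  rw [← sub_eq_zero, primal_sub_canonicalDual hβ hα hdet hx,
    log_one_add_sum_exp_add_negEntropy_of_eq hζ.1 hζ.2
      (fun i => by rw [hcritQ, ← mul_assoc, mul_one_div_cancel hβ, one_mul]),
    sub_self, mul_zero, zero_add]
  exact sum_eq_zero fun i _ => by
    rw [hcritB, mul_div_cancel₀ _ (hα i), sub_self, zero_pow two_ne_zero, zero_div]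

theorem isOpen_negDefDualDomain : IsOpen (negDefDualDomain A Q B) := by
  have : negDefDualDomain A Q B = dualDomain ∩ dualMatrix A Q B ⁻¹'
      ({M | M.det ≠ 0} ∩ {M | ∀ x : n → ℝ, x ≠ 0 → x ⬝ᵥ M *ᵥ x < 0}) := by
    ext ζ
    simp [negDefDualDomain, dualDomain, and_assoc]
  rw [this]
  exact isOpen_dualDomain.inter (((isOpen_ne_fun continuous_id.matrix_det continuous_const).inter
    isOpen_setOf_forall_dotProduct_mulVec_neg).preimage continuous_dualMatrix)

theorem linearIndependent_mulVec_of_isLocalMin (hβ : 0 < β) (hα : ∀ i, 0 < α i)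
    {ζ : ι ⊕ κ → ℝ} {x : n → ℝ} (hmin : IsLocalMin (canonicalDual A Q B f d c β α) ζ)
    (hζ : ζ ∈ dualDomain) (hdet : (dualMatrix A Q B ζ).det ≠ 0)
    (hx : dualMatrix A Q B ζ *ᵥ x = f) :
    LinearIndependent ℝ (fun j => Sum.elim Q B j *ᵥ x) := by
  rw [Fintype.linearIndependent_iff]
  by_contra! hdep
  obtain ⟨v, hv, j, hj⟩ := hdep
  have hv0 : v ≠ 0 := fun h => hj (by simp [h])
  have hline (t : ℝ) : dualMatrix A Q B (ζ + t • v) *ᵥ x = f := by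
    rw [← hx, dualMatrix_mulVec, dualMatrix_mulVec]
    simp only [Pi.add_apply, Pi.smul_apply, add_smul, sum_add_distrib, smul_eq_mul, ← smul_smul,
      ← smul_sum, hv, smul_zero, add_zero]
  have hcont : Continuous fun t : ℝ => ζ + t • v := by fun_prop
  have hdet' : ∀ᶠ t in 𝓝 (0 : ℝ), (dualMatrix A Q B (ζ + t • v)).det ≠ 0 :=
    (continuous_dualMatrix.matrix_det.comp hcont).continuousAt.eventually_ne (by simpa using hdet)
  have hmin' : IsLocalMin (canonicalDual A Q B f d c β α ∘ fun t : ℝ => ζ + t • v) 0 :=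
    IsLocalMin.comp_continuous (by simpa using hmin) hcont.continuousAt
  have hmax : IsLocalMax (fun t : ℝ => dualPotential d c β α (ζ + t • v)) 0 := by
    filter_upwards [hmin', hdet'] with t ht hdt
    simp only [Function.comp_apply, canonicalDual_eq_sub_dualPotential, zero_smul, add_zero,
      inv_mulVec_eq_of_mulVec_eq hdt (hline t), inv_mulVec_eq_of_mulVec_eq hdet hx] at ht ⊢
    linarith
  exact (strictConvexOn_dualPotential hβ hα).not_isLocalMax_comp_add_smul
    (isOpen_dualDomain.mem_nhds hζ) hv0 hmax

end Primal

end

end CanonicalDuality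

open CanonicalDuality

theorem double_min_duality_eq_dual_to_primal_general
    {n p r : ℕ}
    (A : Matrix (Fin n) (Fin n) ℝ) (hA : A.IsSymm)
    (Q : Fin p → Matrix (Fin n) (Fin n) ℝ) (hQ : ∀ i, (Q i).IsSymm)
    (B : Fin r → Matrix (Fin n) (Fin n) ℝ) (hB : ∀ i, (B i).IsSymm)
    (f : Fin n → ℝ) (d : Fin p → ℝ) (c : Fin r → ℝ)
    (β : ℝ) (hβ : 0 < β) (α : Fin r → ℝ) (hα : ∀ i, 0 < α i)
    (Prim : (Fin n → ℝ) → ℝ)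
    (hPrim : Prim = fun x => (1/2) * (x ⬝ᵥ A.mulVec x) - f ⬝ᵥ x
        + (1/β) * Real.log (1 + ∑ i, Real.exp (β * ((1/2) * (x ⬝ᵥ (Q i).mulVec x) + d i)))
        + ∑ i, (α i / 2) * ((1/2) * (x ⬝ᵥ (B i).mulVec x) + c i)^2)
    (Ga : ((Fin p ⊕ Fin r) → ℝ) → Matrix (Fin n) (Fin n) ℝ)
    (hGa : Ga = fun ζ => A + ∑ i, ζ (Sum.inl i) • Q i + ∑ i, ζ (Sum.inr i) • B i)
    (Dual : ((Fin p ⊕ Fin r) → ℝ) → ℝ)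
    (hDual : Dual = fun ζ => -(1/2) * (f ⬝ᵥ (Ga ζ)⁻¹.mulVec f)
        - ((1/β) * ((∑ i, ζ (Sum.inl i) * Real.log (ζ (Sum.inl i)))
            + (1 - ∑ i, ζ (Sum.inl i)) * Real.log (1 - ∑ i, ζ (Sum.inl i)))
          - ∑ i, d i * ζ (Sum.inl i))
        - (∑ i, (ζ (Sum.inr i))^2 / (2 * α i) - ∑ i, c i * ζ (Sum.inr i)))
    (zb : (Fin p ⊕ Fin r) → ℝ)
    (hpos : ∀ i, 0 < zb (Sum.inl i)) (hsum : ∑ i, zb (Sum.inl i) < 1)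
    (hdet : (Ga zb).det ≠ 0)
    (hcrit1 : ∀ i, (1/2) * (f ⬝ᵥ ((Ga zb)⁻¹ * Q i * (Ga zb)⁻¹).mulVec f) + d i
        = (1/β) * Real.log (zb (Sum.inl i) / (1 - ∑ j, zb (Sum.inl j))))
    (hcrit2 : ∀ i, (1/2) * (f ⬝ᵥ ((Ga zb)⁻¹ * B i * (Ga zb)⁻¹).mulVec f) + c i
        = zb (Sum.inr i) / α i)
    (xb : Fin n → ℝ) (hxb : xb = (Ga zb)⁻¹.mulVec f)
    (hmn : p + r = n)
    (hnegdef : ∀ x : Fin n → ℝ, x ≠ 0 → x ⬝ᵥ (Ga zb).mulVec x < 0)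
    (hmin : IsLocalMinOn Dual
      {ζ : (Fin p ⊕ Fin r) → ℝ | (∀ i, 0 < ζ (Sum.inl i)) ∧ (∑ i, ζ (Sum.inl i)) < 1 ∧
        (Ga ζ).det ≠ 0 ∧ ∀ x : Fin n → ℝ, x ≠ 0 → x ⬝ᵥ (Ga ζ).mulVec x < 0} zb) :
    IsLocalMin Prim xb ∧ Prim xb = Dual zb := by
  obtain rfl : Ga = dualMatrix A Q B := hGa
  obtain rfl : Prim = primal A Q B f d c β α := hPrim
  obtain rfl : Dual = canonicalDual A Q B f d c β α := hDual
  have hzb : zb ∈ dualDomain := ⟨hpos, hsum⟩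
  have hfxb : dualMatrix A Q B zb *ᵥ xb = f := by
    rw [hxb, mulVec_mulVec, mul_nonsing_inv _ (isUnit_iff_ne_zero.2 hdet), one_mulVec]
  have hsymm := (isSymm_dualMatrix hA hQ hB zb).inv
  have heq : primal A Q B f d c β α xb = canonicalDual A Q B f d c β α zb :=
    primal_eq_canonicalDual hβ.ne' (fun i => (hα i).ne') hzb hdet hfxb
      (fun i => by rw [← hcrit1, hsymm.dotProduct_mul_mul_mulVec, ← hxb])
      (fun i => by rw [← hcrit2, hsymm.dotProduct_mul_mul_mulVec, ← hxb])
  have hS : negDefDualDomain A Q B ∈ 𝓝 zb :=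
    isOpen_negDefDualDomain.mem_nhds ⟨hpos, hsum, hdet, hnegdef⟩
  have hlocmin : IsLocalMin (canonicalDual A Q B f d c β α) zb := hmin.isLocalMin hS
  obtain ⟨ζ, hζ, hζx⟩ := exists_tendsto_sum_smul_eq (finSumFinEquiv.trans (finCongr hmn))
    (u := fun x j => Sum.elim Q B j *ᵥ x) (g := fun x => f - A *ᵥ x) (by fun_prop) (by fun_prop)
    (linearIndependent_mulVec_of_isLocalMin hβ hα hlocmin hzb hdet hfxb)
    (by rw [← hfxb, dualMatrix_mulVec, add_sub_cancel_left])
  refine ⟨?_, heq⟩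
  filter_upwards [hζ.eventually hS, hζ.eventually hlocmin, hζx] with x hxS hle hx
  calc primal A Q B f d c β α xb = canonicalDual A Q B f d c β α zb := heq
    _ ≤ canonicalDual A Q B f d c β α (ζ x) := hle
    _ ≤ primal A Q B f d c β α x := canonicalDual_le_primal hβ hα ⟨hxS.1, hxS.2.1⟩ hxS.2.2.1
        (by rw [dualMatrix_mulVec, hx, add_sub_cancel])

theorem double_min_duality_eq_dual_to_primal
    {n p r : ℕ} (hn : 0 < n) (hp : 0 < p) (hr : 0 < r)
    (A : Matrix (Fin n) (Fin n) ℝ) (hA : A.IsSymm)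
    (Q : Fin p → Matrix (Fin n) (Fin n) ℝ) (hQ : ∀ i, (Q i).IsSymm)
    (B : Fin r → Matrix (Fin n) (Fin n) ℝ) (hB : ∀ i, (B i).IsSymm)
    (f : Fin n → ℝ) (d : Fin p → ℝ) (c : Fin r → ℝ)
    (β : ℝ) (hβ : 0 < β) (α : Fin r → ℝ) (hα : ∀ i, 0 < α i)
    (Prim : (Fin n → ℝ) → ℝ)
    (hPrim : Prim = fun x => (1/2) * (x ⬝ᵥ A.mulVec x) - f ⬝ᵥ x
        + (1/β) * Real.log (1 + ∑ i, Real.exp (β * ((1/2) * (x ⬝ᵥ (Q i).mulVec x) + d i)))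
        + ∑ i, (α i / 2) * ((1/2) * (x ⬝ᵥ (B i).mulVec x) + c i)^2)
    (Ga : ((Fin p ⊕ Fin r) → ℝ) → Matrix (Fin n) (Fin n) ℝ)
    (hGa : Ga = fun ζ => A + ∑ i, ζ (Sum.inl i) • Q i + ∑ i, ζ (Sum.inr i) • B i)
    (Dual : ((Fin p ⊕ Fin r) → ℝ) → ℝ)
    (hDual : Dual = fun ζ => -(1/2) * (f ⬝ᵥ (Ga ζ)⁻¹.mulVec f)
        - ((1/β) * ((∑ i, ζ (Sum.inl i) * Real.log (ζ (Sum.inl i)))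
            + (1 - ∑ i, ζ (Sum.inl i)) * Real.log (1 - ∑ i, ζ (Sum.inl i)))
          - ∑ i, d i * ζ (Sum.inl i))
        - (∑ i, (ζ (Sum.inr i))^2 / (2 * α i) - ∑ i, c i * ζ (Sum.inr i)))
    (zb : (Fin p ⊕ Fin r) → ℝ)
    (hpos : ∀ i, 0 < zb (Sum.inl i)) (hsum : ∑ i, zb (Sum.inl i) < 1)
    (hdet : (Ga zb).det ≠ 0)
    (hcrit1 : ∀ i, (1/2) * (f ⬝ᵥ ((Ga zb)⁻¹ * Q i * (Ga zb)⁻¹).mulVec f) + d i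
        = (1/β) * Real.log (zb (Sum.inl i) / (1 - ∑ j, zb (Sum.inl j))))
    (hcrit2 : ∀ i, (1/2) * (f ⬝ᵥ ((Ga zb)⁻¹ * B i * (Ga zb)⁻¹).mulVec f) + c i
        = zb (Sum.inr i) / α i)
    (xb : Fin n → ℝ) (hxb : xb = (Ga zb)⁻¹.mulVec f)
    (hmn : p + r = n)
    (hnegdef : ∀ x : Fin n → ℝ, x ≠ 0 → x ⬝ᵥ (Ga zb).mulVec x < 0)
    (hmin : IsLocalMinOn Dual
      {ζ : (Fin p ⊕ Fin r) → ℝ | (∀ i, 0 < ζ (Sum.inl i)) ∧ (∑ i, ζ (Sum.inl i)) < 1 ∧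
        (Ga ζ).det ≠ 0 ∧ ∀ x : Fin n → ℝ, x ≠ 0 → x ⬝ᵥ (Ga ζ).mulVec x < 0} zb) :
    IsLocalMin Prim xb ∧ Prim xb = Dual zb :=
  double_min_duality_eq_dual_to_primal_general A hA Q hQ B hB f d c β hβ α hα Prim hPrim Ga hGa Dual
    hDual zb hpos hsum hdet hcrit1 hcrit2 xb hxb hmn hnegdef hmin
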